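/- A countable intersection of open dense-segment sets containing all segments between points of a countable dense set R ⊆ ℝ^d can be chosen inside the open unit ball with Hausdorff dimension one: i.e., there exists a G_δ set O ⊆ B(0,1) of Hausdorff dimension one with [r,s] ⊆ O for all r, s ∈ R. -/

import Mathlib

/-!
Every set `S` in a metric space lies in a `G_δ` set of the same Hausdorff dimension: if
`μH[q] S = 0`, slightly thickening the pieces of `μH[q]`-small covers of `S` of mesh `2⁻ⁿ` gives
open sets `Vₙ ⊇ S` whose intersection is still `μH[q]`-null, and intersecting over all rational
`q > dimH S` gives the envelope. A countable union of segments has dimension one (exactly one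
once some segment is non-degenerate, which density of `R` in the ball guarantees), so the envelope
of the union of the segments `[r, s]`, cut down to the open ball, is the required set.
-/

open Set Metric MeasureTheory Filter Topology
open scoped ENNReal NNReal

section Thickening

variable {X : Type*} [PseudoEMetricSpace X]

theorem exists_isOpen_superset_ediam_rpow_le {s : Set X} (hs : ediam s ≠ ∞) {d : ℝ} (hd : 0 < d)
    {η : ℝ≥0∞} (hη : η ≠ 0) :
    ∃ U, IsOpen U ∧ s ⊆ U ∧ ediam U ≤ ediam s + η ∧ ediam U ^ d ≤ ediam s ^ d + η := by
  have hcont : Continuous fun δ : ℝ≥0 => ediam s + 2 * (δ : ℝ≥0∞) :=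
    continuous_const.add ((ENNReal.continuous_const_mul (by simp)).comp ENNReal.continuous_coe)
  have hlim := (hcont.tendsto' 0 (ediam s) (by simp)).mono_left (nhdsWithin_le_nhds (s := Ioi 0))
  have hlim_rpow := ((ENNReal.continuous_rpow_const (y := d)).tendsto (ediam s)).comp hlim
  obtain ⟨δ, hδ_pos, hδ_diam, hδ_rpow⟩ := (eventually_mem_nhdsWithin.and <|
    (hlim.eventually (gt_mem_nhds (ENNReal.lt_add_right hs hη))).and
    (hlim_rpow.eventually (gt_mem_nhds (ENNReal.lt_add_right
      (ENNReal.rpow_ne_top_of_nonneg hd.le hs) hη)))).exists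
  have hU := ediam_thickening_le (s := s) δ
  exact ⟨thickening δ s, isOpen_thickening, self_subset_thickening (mod_cast hδ_pos) s,
    hU.trans hδ_diam.le, (ENNReal.rpow_le_rpow hU hd.le).trans hδ_rpow.le⟩

end Thickening

section Envelope

variable {X : Type*} [EMetricSpace X]

theorem exists_isOpen_cover_of_hausdorffMeasure_eq_zero [MeasurableSpace X] [BorelSpace X]
    {d : ℝ} (hd : 0 < d) {S : Set X} (hS : μH[d] S = 0) {ε : ℝ≥0∞} (hε : ε ≠ 0) :
    ∃ U : ℕ → Set X, (∀ n, IsOpen (U n)) ∧ S ⊆ ⋃ n, U n ∧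
      (∀ n, ediam (U n) ≤ ε) ∧ ∑' n, ediam (U n) ^ d ≤ ε := by
  have hε2 : ε / 2 ≠ 0 := ENNReal.div_ne_zero.2 ⟨hε, ENNReal.ofNat_ne_top⟩
  have hinf := hS.trans_lt (pos_iff_ne_zero.2 hε2)
  rw [Measure.hausdorffMeasure_apply] at hinf
  have hsup_nonempty : ∀ t : Set X, ⨆ _ : t.Nonempty, ediam t ^ d = ediam t ^ d := fun t => by
    rcases t.eq_empty_or_nonempty with rfl | ht
    · simp [hd]
    · simp [ht]
  obtain ⟨t, ht_diam, hSt, ht_sum⟩ : ∃ t : ℕ → Set X, (∀ n, ediam (t n) ≤ ε / 2) ∧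
      S ⊆ ⋃ n, t n ∧ ∑' n, ediam (t n) ^ d < ε / 2 := by
    simpa [iInf_lt_iff, hsup_nonempty] using
      (le_iSup₂ (ε / 2) (pos_iff_ne_zero.2 hε2)).trans_lt hinf
  obtain ⟨η, hη_pos, hη_sum⟩ := ENNReal.exists_pos_sum_of_countable' hε2 ℕ
  have ht_fin : ∀ n, ediam (t n) ≠ ∞ := fun n =>
    mt (ENNReal.rpow_eq_top_iff_of_pos hd).2 (ne_top_of_le_ne_top (ne_top_of_lt ht_sum)
      (ENNReal.le_tsum n))
  choose U hU_open htU hU_diam hU_rpow using fun n =>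
    exists_isOpen_superset_ediam_rpow_le (ht_fin n) hd (hη_pos n).ne'
  refine ⟨U, hU_open, hSt.trans (iUnion_mono htU), fun n => ?_, ?_⟩
  · calc ediam (U n) ≤ ε / 2 + ε / 2 :=
          (hU_diam n).trans (add_le_add (ht_diam n) ((ENNReal.le_tsum n).trans hη_sum.le))
      _ = ε := ENNReal.add_halves ε
  · calc ∑' n, ediam (U n) ^ d ≤ ∑' n, (ediam (t n) ^ d + η n) := ENNReal.tsum_le_tsum hU_rpow
      _ = ∑' n, ediam (t n) ^ d + ∑' n, η n := ENNReal.tsum_add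
      _ ≤ ε / 2 + ε / 2 := add_le_add ht_sum.le hη_sum.le
      _ = ε := ENNReal.add_halves ε

theorem exists_isGδ_superset_hausdorffMeasure_eq_zero [MeasurableSpace X] [BorelSpace X]
    {d : ℝ} (hd : 0 < d) {S : Set X} (hS : μH[d] S = 0) :
    ∃ G, S ⊆ G ∧ IsGδ G ∧ μH[d] G = 0 := by
  choose U hU_open hSU hU_diam hU_sum using fun n : ℕ =>
    exists_isOpen_cover_of_hausdorffMeasure_eq_zero hd hS (ε := 2⁻¹ ^ n) (by simp)
  have hlim : Tendsto (fun n : ℕ => (2⁻¹ : ℝ≥0∞) ^ n) atTop (𝓝 0) :=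
    ENNReal.tendsto_pow_atTop_nhds_zero_of_lt_one (by norm_num)
  refine ⟨⋂ n, ⋃ i, U n i, subset_iInter hSU,
    .iInter fun n => (isOpen_iUnion (hU_open n)).isGδ, le_antisymm ?_ zero_le⟩
  calc μH[d] (⋂ n, ⋃ i, U n i) ≤ liminf (fun n => ∑' i, ediam (U n i) ^ d) atTop :=
        Measure.hausdorffMeasure_le_liminf_tsum d _ _ hlim U (.of_forall hU_diam)
          (.of_forall fun n => iInter_subset _ n)
    _ ≤ liminf (fun n : ℕ => (2⁻¹ : ℝ≥0∞) ^ n) atTop := liminf_le_liminf (.of_forall hU_sum)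
    _ = 0 := hlim.liminf_eq

theorem exists_isGδ_superset_dimH_eq (S : Set X) : ∃ G, S ⊆ G ∧ IsGδ G ∧ dimH G = dimH S := by
  borelize X
  have hG : ∀ q : {q : ℚ // dimH S < Real.toNNReal q}, ∃ G, S ⊆ G ∧ IsGδ G ∧
      μH[Real.toNNReal q] G = 0 := fun q =>
    exists_isGδ_superset_hausdorffMeasure_eq_zero
      (NNReal.coe_pos.2 (ENNReal.coe_pos.1 (zero_le.trans_lt q.2)))
      (hausdorffMeasure_of_dimH_lt q.2)
  choose G hSG hG_Gδ hG_null using hG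
  refine ⟨⋂ q, G q, subset_iInter hSG, .iInter hG_Gδ,
    le_antisymm (le_of_forall_gt fun c hc => ?_) (dimH_mono (subset_iInter hSG))⟩
  obtain ⟨q, -, hSq, hqc⟩ := ENNReal.lt_iff_exists_rat_btwn.1 hc
  calc dimH (⋂ q, G q) ≤ dimH (G ⟨q, hSq⟩) := dimH_mono (iInter_subset _ _)
    _ ≤ Real.toNNReal q := dimH_le_of_hausdorffMeasure_ne_top (d := Real.toNNReal q)
      ((hG_null ⟨q, hSq⟩).trans_ne ENNReal.zero_ne_top)
    _ < c := hqc

end Envelope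

theorem Set.nontrivial_of_mem_nhds_subset_closure {X : Type*} [TopologicalSpace X] [T1Space X]
    {x : X} [NeBot (𝓝[≠] x)] {U R : Set X} (hU : U ∈ 𝓝 x) (hUR : U ⊆ closure R) :
    R.Nontrivial :=
  not_subsingleton_iff.1 fun hR =>
    (infinite_of_mem_nhds x hU).nontrivial.not_subsingleton (hR.closure.anti hUR)

theorem dimH_biUnion_segment {E : Type*} [NormedAddCommGroup E] [NormedSpace ℝ E]
    [FiniteDimensional ℝ E] {R : Set E} (hR : R.Countable) (hR_nt : R.Nontrivial) :
    dimH (⋃ r ∈ R, ⋃ s ∈ R, segment ℝ r s) = 1 := by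
  have hseg_le : ∀ r s : E, dimH (segment ℝ r s) ≤ 1 := fun r s => by
    rcases eq_or_ne r s with rfl | hrs
    · simp
    · exact (Real.dimH_segment hrs).le
  obtain ⟨r, hr, s, hs, hrs⟩ := hR_nt
  refine le_antisymm ?_ ?_
  · simp only [dimH_bUnion hR]
    exact iSup₂_le fun r _ => iSup₂_le fun s _ => hseg_le r s
  · rw [← Real.dimH_segment hrs]
    exact dimH_mono fun x hx => mem_biUnion hr (mem_biUnion hs hx)

theorem stmt14 (d : ℕ) (hd : 1 ≤ d)
    (R : Set (EuclideanSpace ℝ (Fin d))) (hRsub : R ⊆ Metric.ball 0 1)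
    (hRcount : R.Countable)
    (hRdense : ∀ x ∈ Metric.ball (0 : EuclideanSpace ℝ (Fin d)) 1,
      ∀ ε > 0, ∃ r ∈ R, ‖r - x‖ < ε) :
    ∃ O : Set (EuclideanSpace ℝ (Fin d)), O ⊆ Metric.ball 0 1 ∧ IsGδ O ∧ dimH O = 1 ∧
      ∀ r ∈ R, ∀ s ∈ R, segment ℝ r s ⊆ O := by
  set S := ⋃ r ∈ R, ⋃ s ∈ R, segment ℝ r s
  have hseg_S : ∀ r ∈ R, ∀ s ∈ R, segment ℝ r s ⊆ S := fun r hr s hs x hx =>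
    mem_biUnion hr (mem_biUnion hs hx)
  have hS_ball : S ⊆ ball 0 1 := iUnion₂_subset fun r hr => iUnion₂_subset fun s hs =>
    (convex_ball 0 1).segment_subset (hRsub hr) (hRsub hs)
  have hR_nt : R.Nontrivial := by
    have : Nontrivial (EuclideanSpace ℝ (Fin d)) := by
      have : Nonempty (Fin d) := ⟨⟨0, hd⟩⟩
      infer_instance
    refine nontrivial_of_mem_nhds_subset_closure (ball_mem_nhds 0 one_pos) fun x hx =>
      Metric.mem_closure_iff.2 fun ε hε => ?_
    obtain ⟨r, hr, hrx⟩ := hRdense x hx ε hε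
    exact ⟨r, hr, by rwa [dist_comm, dist_eq_norm]⟩
  obtain ⟨G, hSG, hG, hG_dim⟩ := exists_isGδ_superset_dimH_eq S
  refine ⟨G ∩ ball 0 1, inter_subset_right, hG.inter isOpen_ball.isGδ, ?_,
    fun r hr s hs => subset_inter ((hseg_S r hr s hs).trans hSG) ((hseg_S r hr s hs).trans hS_ball)⟩
  rw [← dimH_biUnion_segment hRcount hR_nt]
  exact le_antisymm (hG_dim ▸ dimH_mono inter_subset_left) (dimH_mono (subset_inter hSG hS_ball))
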